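/- arXiv:2501.14071 — 8 statements merged into one kernel-verified Lean document; each statement's English description precedes it below -/
import Mathlib

section
/- Let K ≥ 1, a^k > 0, 0 ≤ n^k ≤ N^k for all k, and let f̄^1,…,f̄^K : ℝ → ℝ be continuous functions such that for each k the map φ ↦ f̄^k(φ)·φ is nondecreasing on [n^k, N^k]. Define, for C ∈ [Σ_k a^k n^k, Σ_k a^k N^k], G(C) := max { Σ_k f̄^k(φ^k)·φ^k : n^k ≤ φ^k ≤ N^k for all k, Σ_k a^k φ^k = C }. Then G is nondecreasing on the interval [Σ_k a^k n^k, Σ_k a^k N^k]. -/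
/-!
Given a plan `ψ` feasible for the budget `C₁ ≤ C₂`, move it along the segment towards the
maximal plan `N` until the water consumption reaches `C₂` (intermediate value theorem). Every
coordinate only grows along the way, so by monotonicity of each profit `φ ↦ f̄ᵏ(φ) φ` the new
plan earns at least as much as `ψ`; hence `G(C₁) ≤ G(C₂)`.
-/

open Finset

/-- The farmer's maximal production profit given water budget `C`:
the supremum (attained, for `C` in the feasible interval) of the profit
`∑ k, f k (φ k) * φ k` over production plans `φ` with `n ≤ φ ≤ N` and
water consumption `∑ k, a k * φ k = C`. -/
noncomputable def maxProfit (K : ℕ) (a n N : Fin K → ℝ) (f : Fin K → ℝ → ℝ) (C : ℝ) : ℝ :=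
  sSup {y | ∃ φ : Fin K → ℝ, (∀ k, n k ≤ φ k ∧ φ k ≤ N k) ∧
    (∑ k, a k * φ k = C) ∧ y = ∑ k, f k (φ k) * φ k}

theorem exists_mem_Icc_sum_mul_eq {ι : Type*} [Fintype ι] (a : ι → ℝ) {lo hi : ι → ℝ}
    (hlh : lo ≤ hi) {C : ℝ} (hC : C ∈ Set.Icc (∑ k, a k * lo k) (∑ k, a k * hi k)) :
    ∃ φ ∈ Set.Icc lo hi, ∑ k, a k * φ k = C :=
  (convex_Icc lo hi).isPreconnected.intermediate_value (Set.left_mem_Icc.2 hlh)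
    (Set.right_mem_Icc.2 hlh) (by fun_prop) hC

section

variable {ι : Type*} [Fintype ι] {n N : ι → ℝ} {f : ι → ℝ → ℝ}

theorem sum_mul_self_le_of_le
    (hmono : ∀ k, MonotoneOn (fun x => f k x * x) (Set.Icc (n k) (N k)))
    {ψ χ : ι → ℝ} (hψ : ∀ k, n k ≤ ψ k ∧ ψ k ≤ N k) (hχ : ∀ k, n k ≤ χ k ∧ χ k ≤ N k)
    (hψχ : ψ ≤ χ) :
    ∑ k, f k (ψ k) * ψ k ≤ ∑ k, f k (χ k) * χ k :=
  sum_le_sum fun k _ => hmono k (hψ k) (hχ k) (hψχ k)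

end

section

variable {K : ℕ} {a n N : Fin K → ℝ} {f : Fin K → ℝ → ℝ}

theorem bddAbove_profits (hnN : ∀ k, n k ≤ N k)
    (hmono : ∀ k, MonotoneOn (fun x => f k x * x) (Set.Icc (n k) (N k))) (C : ℝ) :
    BddAbove {y | ∃ φ : Fin K → ℝ, (∀ k, n k ≤ φ k ∧ φ k ≤ N k) ∧
      (∑ k, a k * φ k = C) ∧ y = ∑ k, f k (φ k) * φ k} := by
  refine ⟨∑ k, f k (N k) * N k, ?_⟩
  rintro y ⟨φ, hφ, -, rfl⟩
  exact sum_mul_self_le_of_le hmono hφ (fun k => ⟨hnN k, le_rfl⟩) fun k => (hφ k).2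

theorem sum_mul_self_le_maxProfit (hnN : ∀ k, n k ≤ N k)
    (hmono : ∀ k, MonotoneOn (fun x => f k x * x) (Set.Icc (n k) (N k)))
    {φ : Fin K → ℝ} (hφ : ∀ k, n k ≤ φ k ∧ φ k ≤ N k) :
    ∑ k, f k (φ k) * φ k ≤ maxProfit K a n N f (∑ k, a k * φ k) :=
  le_csSup (bddAbove_profits hnN hmono _) ⟨φ, hφ, rfl, rfl⟩

end

theorem stmt1_general (K : ℕ) (a n N : Fin K → ℝ)
    (hnN : ∀ k, n k ≤ N k)
    (f : Fin K → ℝ → ℝ)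
    (hmono : ∀ k, MonotoneOn (fun x => f k x * x) (Set.Icc (n k) (N k))) :
    MonotoneOn (maxProfit K a n N f) (Set.Icc (∑ k, a k * n k) (∑ k, a k * N k)) := by
  intro C₁ hC₁ C₂ hC₂ hC₁₂
  obtain ⟨φ, hφ, rfl⟩ := exists_mem_Icc_sum_mul_eq a (fun k => hnN k) hC₁
  refine csSup_le ⟨_, φ, fun k => ⟨hφ.1 k, hφ.2 k⟩, rfl, rfl⟩ ?_
  rintro y ⟨ψ, hψ, hψC₁, rfl⟩
  obtain ⟨χ, hψχ, rfl⟩ :=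
    exists_mem_Icc_sum_mul_eq a (fun k => (hψ k).2) ⟨hψC₁.symm ▸ hC₁₂, hC₂.2⟩
  have hχ : ∀ k, n k ≤ χ k ∧ χ k ≤ N k := fun k => ⟨(hψ k).1.trans (hψχ.1 k), hψχ.2 k⟩
  calc ∑ k, f k (ψ k) * ψ k ≤ ∑ k, f k (χ k) * χ k := sum_mul_self_le_of_le hmono hψ hχ hψχ.1
    _ ≤ _ := sum_mul_self_le_maxProfit hnN hmono hχ

theorem stmt1 (K : ℕ) (hK : 1 ≤ K) (a n N : Fin K → ℝ)
    (ha : ∀ k, 0 < a k) (hn : ∀ k, 0 ≤ n k) (hnN : ∀ k, n k ≤ N k)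
    (f : Fin K → ℝ → ℝ) (hf : ∀ k, Continuous (f k))
    (hmono : ∀ k, MonotoneOn (fun x => f k x * x) (Set.Icc (n k) (N k))) :
    MonotoneOn (maxProfit K a n N f) (Set.Icc (∑ k, a k * n k) (∑ k, a k * N k)) :=
  stmt1_general K a n N hnN f hmono
end

section
/- (Family of trading equilibria.) Consider the one-period groundwater market with J agents. Assume for every agent j that G_j is continuous and nondecreasing on [c̲_j, c̄_j]. Let p ≥ 0 and let ψ ∈ ℝ^J be any vector of trades satisfying Σ_j ψ_j = 0 and c̲_j ≤ W_j − ψ_j ≤ c̄_j for all j, and such that the profile (C_j, ψ_j)_{j} with C_j := W_j − ψ_j is feasible at price p. Then ((C, ψ), p) is a Nash equilibrium. -/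
/-- Feasibility of a strategy profile `(C, ψ)` in the one-period groundwater
market: market clearing `∑ j, ψ j = 0` and, for every agent `j`, the
consumption bounds `cl j ≤ C j ≤ cu j` and the water budget constraint
`-∑_{i ≠ j} W i ≤ C j + ψ j ≤ W j`. -/
def Feasible (J : ℕ) (W cl cu : Fin J → ℝ) (C ψ : Fin J → ℝ) : Prop :=
  (∑ j, ψ j = 0) ∧
  ∀ j, cl j ≤ C j ∧ C j ≤ cu j ∧
    -(∑ i ∈ Finset.univ.erase j, W i) ≤ C j + ψ j ∧ C j + ψ j ≤ W j

/-- Nash equilibrium of the one-period groundwater market: the profile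
`(C, ψ)` is feasible; no agent `j` can improve her payoff
`G j (C j) + ψ j * p` by a unilateral feasible deviation `(C', ψ')`; and the
price-setter cannot improve her payoff `p * ∑ j, ψ j` by choosing another
price. -/
def NashEq (J : ℕ) (W cl cu : Fin J → ℝ) (G : Fin J → ℝ → ℝ)
    (C ψ : Fin J → ℝ) (p : ℝ) : Prop :=
  Feasible J W cl cu C ψ ∧
  (∀ j (C' ψ' : ℝ),
    Feasible J W cl cu (Function.update C j C') (Function.update ψ j ψ') →
    G j C' + ψ' * p ≤ G j (C j) + ψ j * p) ∧
  (∀ p' : ℝ, p' * ∑ j, ψ j ≤ p * ∑ j, ψ j)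

/-! Market clearing pins down the trade of a unilaterally deviating agent, so such an agent can
only change her consumption; since she already consumes all the water left after trading, she
can only consume less, and a nondecreasing profit cannot rise. The price-setter's payoff is
`p * 0` whatever the price. -/

theorem Finset.eq_of_sum_update_eq_sum {ι M : Type*} [Fintype ι] [DecidableEq ι]
    [AddCancelCommMonoid M] {f : ι → M} {i : ι} {b : M}
    (h : ∑ k, Function.update f i b k = ∑ k, f k) : b = f i := by
  rw [Finset.sum_update_of_mem (Finset.mem_univ i), Finset.sdiff_singleton_eq_erase,
    ← Finset.add_sum_erase _ _ (Finset.mem_univ i)] at h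
  exact add_right_cancel h

section Deviation

variable {J : ℕ} {W cl cu C ψ : Fin J → ℝ} {j : Fin J} {C' ψ' : ℝ}

theorem Feasible.trade_eq_of_update (hfeas : Feasible J W cl cu C ψ)
    (hdev : Feasible J W cl cu (Function.update C j C') (Function.update ψ j ψ')) :
    ψ' = ψ j :=
  Finset.eq_of_sum_update_eq_sum (hdev.1.trans hfeas.1.symm)

theorem Feasible.consumption_le_of_update (hfeas : Feasible J W cl cu C ψ)
    (hdev : Feasible J W cl cu (Function.update C j C') (Function.update ψ j ψ')) :
    C' ≤ W j - ψ j := by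
  have hbudget := (hdev.2 j).2.2.2
  simp only [Function.update_self] at hbudget
  linarith [hfeas.trade_eq_of_update hdev]

theorem Feasible.consumption_mem_Icc_of_update
    (hdev : Feasible J W cl cu (Function.update C j C') (Function.update ψ j ψ')) :
    C' ∈ Set.Icc (cl j) (cu j) := by
  obtain ⟨hlower, hupper, -⟩ := hdev.2 j
  simp only [Function.update_self] at hlower hupper
  exact ⟨hlower, hupper⟩

end Deviation

theorem stmt5_general (J : ℕ) (W cl cu : Fin J → ℝ) (G : Fin J → ℝ → ℝ)
    (hGmono : ∀ j, MonotoneOn (G j) (Set.Icc (cl j) (cu j)))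
    (p : ℝ) (ψ : Fin J → ℝ)
    (hfeas : Feasible J W cl cu (fun j => W j - ψ j) ψ) :
    NashEq J W cl cu G (fun j => W j - ψ j) ψ p := by
  refine ⟨hfeas, fun j C' ψ' hdev => ?_, fun p' => by rw [hfeas.1, mul_zero, mul_zero]⟩
  have hconsumption : G j C' ≤ G j (W j - ψ j) :=
    hGmono j hdev.consumption_mem_Icc_of_update
      ⟨(hfeas.2 j).1, (hfeas.2 j).2.1⟩ (hfeas.consumption_le_of_update hdev)
  rw [hfeas.trade_eq_of_update hdev]
  linarith

theorem stmt5 (J : ℕ) (hJ : 1 ≤ J) (W cl cu : Fin J → ℝ) (G : Fin J → ℝ → ℝ)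
    (hG : ∀ j, ContinuousOn (G j) (Set.Icc (cl j) (cu j)))
    (hGmono : ∀ j, MonotoneOn (G j) (Set.Icc (cl j) (cu j)))
    (p : ℝ) (hp : 0 ≤ p) (ψ : Fin J → ℝ)
    (hψsum : ∑ j, ψ j = 0)
    (hψbounds : ∀ j, cl j ≤ W j - ψ j ∧ W j - ψ j ≤ cu j)
    (hfeas : Feasible J W cl cu (fun j => W j - ψ j) ψ) :
    NashEq J W cl cu G (fun j => W j - ψ j) ψ p :=
  stmt5_general J W cl cu G hGmono p ψ hfeas
end

section
/- (Social optimum in the unconstrained power model.) Let R > 0 and let p° be the unique solution of Σ_{j,k} a^k d_j^k (p° + e_j^k)^{1/(α_j^k − 1)} = R with p° > −min_{j,k} e_j^k. Define φ*_j^k := d_j^k (p° + e_j^k)^{1/(α_j^k − 1)}. Then φ* = (φ*_j)_{j=1,…,J} is the unique maximizer of the total production profit Σ_{j=1}^J F_j(φ_j) over all φ with φ_j ∈ ℝ_{≥0}^K for each j and Σ_{j,k} a^k φ_j^k = R. -/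
/-- Cost-shift coefficient `e j k = q j k / a k` in the power model. -/
noncomputable def ecoef {J K : ℕ} (q : Fin J → Fin K → ℝ) (a : Fin K → ℝ)
    (j : Fin J) (k : Fin K) : ℝ :=
  q j k / a k

/-- Scale coefficient `d j k = (a k / (α j k * f j k)) ^ (1 / (α j k - 1))`
in the power model. -/
noncomputable def dcoef {J K : ℕ} (f α : Fin J → Fin K → ℝ) (a : Fin K → ℝ)
    (j : Fin J) (k : Fin K) : ℝ :=
  (a k / (α j k * f j k)) ^ (1 / (α j k - 1))

/-- Agent `j`'s production profit in the power model. -/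
noncomputable def prodProfit {J K : ℕ} (f q : Fin J → Fin K → ℝ)
    (α : Fin J → Fin K → ℝ) (j : Fin J) (φ : Fin K → ℝ) : ℝ :=
  ∑ k, (f j k * φ k ^ α j k - q j k * φ k)


open Real

/-- Tangent-line inequality for the strictly concave function `x ↦ x ^ p`, `0 < p < 1`. -/
lemma tangent_rpow {x c p : ℝ} (hx : 0 ≤ x) (hc : 0 < c) (hp1 : 0 < p) (hp2 : p < 1) :
    x ^ p ≤ c ^ p + p * c ^ (p - 1) * (x - c) ∧
      (x ^ p = c ^ p + p * c ^ (p - 1) * (x - c) → x = c) := by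
  set s : ℝ := x / c - 1 with hs_def
  have hcne : c ≠ 0 := hc.ne'
  have hs : -1 ≤ s := by
    have : 0 ≤ x / c := div_nonneg hx hc.le
    simp only [hs_def]; linarith
  have hxc : x = c * (1 + s) := by linear_combination (-c) * hs_def - div_mul_cancel₀ x hcne
  have hcp : 0 < c ^ p := rpow_pos_of_pos hc p
  have hxp : x ^ p = c ^ p * (1 + s) ^ p := by
    rw [hxc, mul_rpow hc.le (by linarith)]
  have hrw : p * c ^ (p - 1) * (x - c) = c ^ p * (p * s) := by
    rw [rpow_sub hc, rpow_one]
    rw [hxc]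
    linear_combination (p * s) * (div_mul_cancel₀ (c ^ p) hcne)
  constructor
  · have key : (1 + s) ^ p ≤ 1 + p * s :=
      rpow_one_add_le_one_add_mul_self hs hp1.le hp2.le
    have := mul_le_mul_of_nonneg_left key hcp.le
    rw [hxp, hrw]; nlinarith
  · intro heq
    by_contra hne
    have hs' : s ≠ 0 := by
      intro h0
      apply hne
      rw [hxc, h0]; ring
    have key : (1 + s) ^ p < 1 + p * s :=
      rpow_one_add_lt_one_add_mul_self hs hs' hp1 hp2
    have := mul_lt_mul_of_pos_left key hcp
    rw [hxp, hrw] at heq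
    nlinarith

/-- Pointwise optimality of `c` for one good: tangent-line bound on the profit term. -/
lemma good_opt {F Q A p0 αv : ℝ} (hF : 0 < F) (hA : 0 < A)
    (hα : 0 < αv) (hα1 : αv < 1) (ht : 0 < p0 + Q / A) :
    0 < (A / (αv * F)) ^ (1 / (αv - 1)) * (p0 + Q / A) ^ (1 / (αv - 1)) ∧
    ∀ x : ℝ, 0 ≤ x →
      (F * x ^ αv - Q * x ≤
        F * ((A / (αv * F)) ^ (1 / (αv - 1)) * (p0 + Q / A) ^ (1 / (αv - 1))) ^ αv -
          Q * ((A / (αv * F)) ^ (1 / (αv - 1)) * (p0 + Q / A) ^ (1 / (αv - 1))) +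
          A * p0 * (x - (A / (αv * F)) ^ (1 / (αv - 1)) * (p0 + Q / A) ^ (1 / (αv - 1)))) ∧
      (F * x ^ αv - Q * x =
        F * ((A / (αv * F)) ^ (1 / (αv - 1)) * (p0 + Q / A) ^ (1 / (αv - 1))) ^ αv -
          Q * ((A / (αv * F)) ^ (1 / (αv - 1)) * (p0 + Q / A) ^ (1 / (αv - 1))) +
          A * p0 * (x - (A / (αv * F)) ^ (1 / (αv - 1)) * (p0 + Q / A) ^ (1 / (αv - 1))) →
        x = (A / (αv * F)) ^ (1 / (αv - 1)) * (p0 + Q / A) ^ (1 / (αv - 1))) := by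
  set t : ℝ := p0 + Q / A with ht_def
  set s0 : ℝ := A / (αv * F) with hs0_def
  set c : ℝ := s0 ^ (1 / (αv - 1)) * t ^ (1 / (αv - 1)) with hc_def
  have hs0 : 0 < s0 := div_pos hA (mul_pos hα hF)
  have hαne : αv - 1 ≠ 0 := by linarith
  have hc_eq : c = (s0 * t) ^ (1 / (αv - 1)) := by
    rw [hc_def, mul_rpow hs0.le ht.le]
  have hst : 0 < s0 * t := mul_pos hs0 ht
  have hc : 0 < c := by rw [hc_eq]; exact rpow_pos_of_pos hst _
  have hderiv : c ^ (αv - 1) = s0 * t := by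
    rw [hc_eq, ← rpow_mul hst.le, one_div, inv_mul_cancel₀ hαne, rpow_one]
  have hFa : F * (αv * c ^ (αv - 1)) = A * t := by
    rw [hderiv, hs0_def]
    field_simp
  have hAt : A * t - Q = A * p0 := by
    rw [ht_def]; field_simp; ring
  refine ⟨hc, fun x hx => ?_⟩
  obtain ⟨h1, h2⟩ := tangent_rpow hx hc hα hα1
  constructor
  · have := mul_le_mul_of_nonneg_left h1 hF.le
    nlinarith
  · intro heq
    apply h2
    have hF' : F ≠ 0 := hF.ne'
    have : F * x ^ αv = F * (c ^ αv + αv * c ^ (αv - 1) * (x - c)) := by nlinarith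
    have := mul_left_cancel₀ hF' this
    linarith [this]

theorem stmt9 (J K : ℕ) (hJ : 1 ≤ J) (hK : 1 ≤ K)
    (f q : Fin J → Fin K → ℝ) (a : Fin K → ℝ) (α : Fin J → Fin K → ℝ)
    (hf : ∀ j k, 0 < f j k) (hq : ∀ j k, 0 ≤ q j k) (ha : ∀ k, 0 < a k)
    (hα : ∀ j k, α j k ∈ Set.Ioo (0 : ℝ) 1)
    (R : ℝ) (hR : 0 < R) (p0 : ℝ)
    (hp0 : -(⨅ j, ⨅ k, ecoef q a j k) < p0)
    (hclear : ∑ j, ∑ k, a k * dcoef f α a j k *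
      (p0 + ecoef q a j k) ^ (1 / (α j k - 1)) = R) :
    let φstar : Fin J → Fin K → ℝ := fun j k =>
      dcoef f α a j k * (p0 + ecoef q a j k) ^ (1 / (α j k - 1))
    ((∀ j k, 0 ≤ φstar j k) ∧ ∑ j, ∑ k, a k * φstar j k = R) ∧
    (∀ φ : Fin J → Fin K → ℝ, (∀ j k, 0 ≤ φ j k) →
      (∑ j, ∑ k, a k * φ j k = R) →
      (∑ j, prodProfit f q α j (φ j) ≤ ∑ j, prodProfit f q α j (φstar j)) ∧
      (∑ j, prodProfit f q α j (φ j) = ∑ j, prodProfit f q α j (φstar j) →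
        φ = φstar)) := by
  intro φstar
  have hpe : ∀ j k, 0 < p0 + q j k / a k := by
    intro j k
    have h1 : (⨅ j, ⨅ k, ecoef q a j k) ≤ ⨅ k, ecoef q a j k :=
      ciInf_le (Set.Finite.bddBelow (Set.finite_range _)) j
    have h2 : (⨅ k, ecoef q a j k) ≤ ecoef q a j k :=
      ciInf_le (Set.Finite.bddBelow (Set.finite_range _)) k
    have : (⨅ j, ⨅ k, ecoef q a j k) ≤ q j k / a k := by
      simpa [ecoef] using h1.trans h2
    linarith
  have hkey : ∀ j k, 0 < φstar j k ∧ ∀ x : ℝ, 0 ≤ x →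
      (f j k * x ^ α j k - q j k * x ≤
        f j k * φstar j k ^ α j k - q j k * φstar j k + a k * p0 * (x - φstar j k)) ∧
      (f j k * x ^ α j k - q j k * x =
        f j k * φstar j k ^ α j k - q j k * φstar j k + a k * p0 * (x - φstar j k) →
        x = φstar j k) := by
    intro j k
    have h := good_opt (p0 := p0) (hf j k) (ha k) (hα j k).1 (hα j k).2 (hpe j k)
    have hφeq : φstar j k =
        (a k / (α j k * f j k)) ^ (1 / (α j k - 1)) *
          (p0 + q j k / a k) ^ (1 / (α j k - 1)) := by
      simp [φstar, dcoef, ecoef]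
    rw [hφeq]
    exact h
  have hsum_star : ∑ j, ∑ k, a k * φstar j k = R := by
    rw [← hclear]
    exact Finset.sum_congr rfl fun j _ =>
      Finset.sum_congr rfl fun k _ => (mul_assoc _ _ _).symm
  refine ⟨⟨fun j k => (hkey j k).1.le, hsum_star⟩, fun φ hφ hφR => ?_⟩
  have hle : ∀ j k, f j k * φ j k ^ α j k - q j k * φ j k ≤
      f j k * φstar j k ^ α j k - q j k * φstar j k + a k * p0 * (φ j k - φstar j k) :=
    fun j k => ((hkey j k).2 _ (hφ j k)).1
  have hzero : ∑ j, ∑ k, a k * p0 * (φ j k - φstar j k) = 0 := by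
    have e1 : ∑ j, ∑ k, a k * p0 * (φ j k - φstar j k)
        = ∑ j, ∑ k, (p0 * (a k * φ j k) - p0 * (a k * φstar j k)) :=
      Finset.sum_congr rfl fun j _ => Finset.sum_congr rfl fun k _ => by ring
    rw [e1]
    simp only [Finset.sum_sub_distrib, ← Finset.mul_sum]
    rw [hφR, hsum_star]
    ring
  simp only [prodProfit]
  have hmain : ∑ j, ∑ k, (f j k * φ j k ^ α j k - q j k * φ j k) ≤
      ∑ j, ∑ k, (f j k * φstar j k ^ α j k - q j k * φstar j k) := by
    calc ∑ j, ∑ k, (f j k * φ j k ^ α j k - q j k * φ j k)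
        ≤ ∑ j, ∑ k, ((f j k * φstar j k ^ α j k - q j k * φstar j k) +
            a k * p0 * (φ j k - φstar j k)) :=
          Finset.sum_le_sum fun j _ => Finset.sum_le_sum fun k _ => hle j k
      _ = ∑ j, ∑ k, (f j k * φstar j k ^ α j k - q j k * φstar j k) +
            ∑ j, ∑ k, a k * p0 * (φ j k - φstar j k) := by
          simp [Finset.sum_add_distrib]
      _ = _ := by rw [hzero, add_zero]
  refine ⟨hmain, fun heq => ?_⟩
  have h0 : ∑ j, ∑ k, ((f j k * φstar j k ^ α j k - q j k * φstar j k) +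
      a k * p0 * (φ j k - φstar j k) -
      (f j k * φ j k ^ α j k - q j k * φ j k)) = 0 := by
    simp only [Finset.sum_sub_distrib, Finset.sum_add_distrib]
    rw [hzero]
    simp only [Finset.sum_sub_distrib] at heq
    linarith
  have hnn : ∀ j ∈ Finset.univ, (0:ℝ) ≤ ∑ k, ((f j k * φstar j k ^ α j k - q j k * φstar j k) +
      a k * p0 * (φ j k - φstar j k) - (f j k * φ j k ^ α j k - q j k * φ j k)) :=
    fun j _ => Finset.sum_nonneg fun k _ => sub_nonneg.2 (hle j k)
  have h1 := (Finset.sum_eq_zero_iff_of_nonneg hnn).1 h0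
  funext j k
  have h2 := (Finset.sum_eq_zero_iff_of_nonneg
    (fun k (_ : k ∈ Finset.univ) => sub_nonneg.2 (hle j k))).1 (h1 j (Finset.mem_univ j))
    k (Finset.mem_univ k)
  exact ((hkey j k).2 _ (hφ j k)).2 (by linarith [h2])
end

section
/- (The market price p° implements the social optimum.) Let W_1,…,W_J ∈ ℝ with R := Σ_j W_j > 0, let p° be the unique solution of Σ_{j,k} a^k d_j^k (p° + e_j^k)^{1/(α_j^k − 1)} = R with p° > −min_{j,k} e_j^k, and set φ*_j^k := d_j^k (p° + e_j^k)^{1/(α_j^k − 1)} and ψ*_j := W_j − Σ_k a^k φ*_j^k. Then (i) Σ_j ψ*_j = 0 (the market clears), and (ii) for each agent j, φ*_j is the unique maximizer over φ ∈ ℝ_{≥0}^K of agent j's payoff F_j(φ) + (W_j − Σ_k a^k φ^k)·p°. -/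
noncomputable def xstar (fv c αv : ℝ) : ℝ := (c / (αv * fv)) ^ (1 / (αv - 1))

lemma xstar_pos {fv c αv : ℝ} (hf : 0 < fv) (hc : 0 < c) (hα0 : 0 < αv) :
    0 < xstar fv c αv :=
  Real.rpow_pos_of_pos (by positivity) _

lemma xstar_pow {fv c αv : ℝ} (hf : 0 < fv) (hc : 0 < c) (hα0 : 0 < αv)
    (hα1 : αv < 1) : (xstar fv c αv) ^ (αv - 1) = c / (αv * fv) := by
  have hb : (0:ℝ) < c / (αv * fv) := by positivity
  have hne : αv - 1 ≠ 0 := by linarith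
  rw [xstar, ← Real.rpow_mul hb.le, one_div, inv_mul_cancel₀ hne, Real.rpow_one]

lemma key_le {fv c αv : ℝ} (hf : 0 < fv) (hc : 0 < c) (hα0 : 0 < αv)
    (hα1 : αv < 1) {x : ℝ} (hx : 0 ≤ x) :
    fv * x ^ αv - c * x ≤ fv * (xstar fv c αv) ^ αv - c * xstar fv c αv := by
  set s := xstar fv c αv with hs
  have hspos : 0 < s := xstar_pos hf hc hα0
  have hsp : s ^ (αv - 1) = c / (αv * fv) := xstar_pow hf hc hα0 hα1
  have hderiv : αv * fv * s ^ (αv - 1) = c := by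
    rw [hsp]; field_simp
  have hsα : s ^ αv = s * s ^ (αv - 1) := by
    nth_rewrite 1 [show αv = 1 + (αv - 1) by ring]
    rw [Real.rpow_add hspos, Real.rpow_one]
  have ht : (x / s) ^ αv * 1 ^ (1 - αv) ≤ αv * (x / s) + (1 - αv) * 1 :=
    Real.geom_mean_le_arith_mean2_weighted hα0.le (by linarith) (by positivity)
      zero_le_one (by ring)
  rw [Real.one_rpow, mul_one, mul_one] at ht
  have hdiv : (x / s) ^ αv = x ^ αv / s ^ αv := Real.div_rpow hx hspos.le αv
  rw [hdiv] at ht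
  have hsαpos : 0 < s ^ αv := Real.rpow_pos_of_pos hspos _
  have h1 : x ^ αv ≤ (αv * (x / s) + (1 - αv)) * s ^ αv := by
    rw [div_le_iff₀ hsαpos] at ht
    linarith
  have h2 : (αv * (x / s) + (1 - αv)) * s ^ αv
      = αv * s ^ (αv - 1) * x + (1 - αv) * s ^ αv := by
    rw [hsα]; field_simp
  have h3 : fv * x ^ αv ≤ fv * (αv * s ^ (αv - 1) * x + (1 - αv) * s ^ αv) := by
    rw [← h2]; exact mul_le_mul_of_nonneg_left h1 hf.le
  have h4 : fv * (αv * s ^ (αv - 1) * x + (1 - αv) * s ^ αv)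
      = c * x + fv * s ^ αv - c * s := by
    rw [hsα]; linear_combination (x - s) * hderiv
  linarith

lemma key_eq {fv c αv : ℝ} (hf : 0 < fv) (hc : 0 < c) (hα0 : 0 < αv)
    (hα1 : αv < 1) {x : ℝ} (hx : 0 ≤ x)
    (heq : fv * x ^ αv - c * x = fv * (xstar fv c αv) ^ αv - c * xstar fv c αv) :
    x = xstar fv c αv := by
  set s := xstar fv c αv with hs
  have hspos : 0 < s := xstar_pos hf hc hα0
  by_contra hne
  have hm : (0:ℝ) ≤ (1/2 : ℝ) • x + (1/2 : ℝ) • s := by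
    simp only [smul_eq_mul]; nlinarith
  have hcc := (Real.strictConcaveOn_rpow hα0 hα1).2 (Set.mem_Ici.2 hx)
    (Set.mem_Ici.2 hspos.le) hne (by norm_num : (0:ℝ) < 1/2)
    (by norm_num : (0:ℝ) < 1/2) (by norm_num)
  simp only [smul_eq_mul] at hcc hm
  have hle := key_le hf hc hα0 hα1 (x := 1/2 * x + 1/2 * s) (by linarith [hm])
  nlinarith [hle, hcc, heq]

theorem stmt10 (J K : ℕ) (hJ : 1 ≤ J) (hK : 1 ≤ K)
    (f q : Fin J → Fin K → ℝ) (a : Fin K → ℝ) (α : Fin J → Fin K → ℝ)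
    (hf : ∀ j k, 0 < f j k) (hq : ∀ j k, 0 ≤ q j k) (ha : ∀ k, 0 < a k)
    (hα : ∀ j k, α j k ∈ Set.Ioo (0 : ℝ) 1)
    (W : Fin J → ℝ) (hW : 0 < ∑ j, W j) (p0 : ℝ)
    (hp0 : -(⨅ j, ⨅ k, ecoef q a j k) < p0)
    (hclear : ∑ j, ∑ k, a k * dcoef f α a j k *
      (p0 + ecoef q a j k) ^ (1 / (α j k - 1)) = ∑ j, W j) :
    let φstar : Fin J → Fin K → ℝ := fun j k =>
      dcoef f α a j k * (p0 + ecoef q a j k) ^ (1 / (α j k - 1))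
    let ψstar : Fin J → ℝ := fun j => W j - ∑ k, a k * φstar j k
    (∑ j, ψstar j = 0) ∧
    (∀ j, (∀ φ : Fin K → ℝ, (∀ k, 0 ≤ φ k) →
        prodProfit f q α j φ + (W j - ∑ k, a k * φ k) * p0 ≤
          prodProfit f q α j (φstar j) + (W j - ∑ k, a k * φstar j k) * p0) ∧
      (∀ φ : Fin K → ℝ, (∀ k, 0 ≤ φ k) →
        prodProfit f q α j φ + (W j - ∑ k, a k * φ k) * p0 =
          prodProfit f q α j (φstar j) + (W j - ∑ k, a k * φstar j k) * p0 →
        φ = φstar j)) := by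
  intro φstar ψstar
  have hJne : Nonempty (Fin J) := ⟨⟨0, hJ⟩⟩
  have hKne : Nonempty (Fin K) := ⟨⟨0, hK⟩⟩
  -- positivity of p0 + e j k
  have hpe : ∀ j k, 0 < p0 + ecoef q a j k := by
    intro j k
    have h1 : (⨅ j, ⨅ k, ecoef q a j k) ≤ ⨅ k, ecoef q a j k :=
      ciInf_le (Finite.bddBelow_range _) j
    have h2 : (⨅ k, ecoef q a j k) ≤ ecoef q a j k :=
      ciInf_le (Finite.bddBelow_range _) k
    linarith
  have hckey : ∀ j k, q j k + a k * p0 = a k * (p0 + ecoef q a j k) := by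
    intro j k
    rw [ecoef, mul_add, mul_div_cancel₀ _ (ha k).ne']
    ring
  have hcpos : ∀ j k, 0 < q j k + a k * p0 := by
    intro j k; rw [hckey]; exact mul_pos (ha k) (hpe j k)
  have hφeq : ∀ j k, φstar j k = xstar (f j k) (q j k + a k * p0) (α j k) := by
    intro j k
    show dcoef f α a j k * (p0 + ecoef q a j k) ^ (1 / (α j k - 1)) = _
    rw [xstar, hckey, dcoef]
    have h1 : a k * (p0 + ecoef q a j k) / (α j k * f j k)
        = (a k / (α j k * f j k)) * (p0 + ecoef q a j k) := by ring
    rw [h1, Real.mul_rpow (div_pos (ha k) (mul_pos (hα j k).1 (hf j k))).le (hpe j k).le]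
  -- payoff rearrangement
  have hpay : ∀ j (φ : Fin K → ℝ),
      prodProfit f q α j φ + (W j - ∑ k, a k * φ k) * p0
        = (∑ k, (f j k * φ k ^ α j k - (q j k + a k * p0) * φ k)) + W j * p0 := by
    intro j φ
    have h1 : ∑ k, (f j k * φ k ^ α j k - (q j k + a k * p0) * φ k)
        = ∑ k, ((f j k * φ k ^ α j k - q j k * φ k) - a k * φ k * p0) := by
      apply Finset.sum_congr rfl; intros; ring
    rw [h1, Finset.sum_sub_distrib, prodProfit, sub_mul, Finset.sum_mul]
    ring
  constructor
  · show ∑ j, (W j - ∑ k, a k * φstar j k) = 0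
    rw [Finset.sum_sub_distrib]
    have h1 : ∑ j, ∑ k, a k * φstar j k = ∑ j, W j := by
      rw [← hclear]
      apply Finset.sum_congr rfl; intro j _
      apply Finset.sum_congr rfl; intro k _
      show a k * (dcoef f α a j k * (p0 + ecoef q a j k) ^ (1 / (α j k - 1))) = _
      ring
    rw [h1, sub_self]
  · intro j
    have hφs : ∀ k, 0 ≤ φstar j k := by
      intro k; rw [hφeq j k]
      exact (xstar_pos (hf j k) (hcpos j k) (hα j k).1).le
    have hle : ∀ (φ : Fin K → ℝ), (∀ k, 0 ≤ φ k) → ∀ k,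
        f j k * φ k ^ α j k - (q j k + a k * p0) * φ k
          ≤ f j k * φstar j k ^ α j k - (q j k + a k * p0) * φstar j k := by
      intro φ hφ k
      rw [hφeq j k]
      exact key_le (hf j k) (hcpos j k) (hα j k).1 (hα j k).2 (hφ k)
    constructor
    · intro φ hφ
      rw [hpay j φ, hpay j (φstar j)]
      exact add_le_add_left (Finset.sum_le_sum fun k _ => hle φ hφ k) _
    · intro φ hφ heq
      rw [hpay j φ, hpay j (φstar j)] at heq
      have h0 : ∑ k, ((f j k * φstar j k ^ α j k - (q j k + a k * p0) * φstar j k)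
          - (f j k * φ k ^ α j k - (q j k + a k * p0) * φ k)) = 0 := by
        rw [Finset.sum_sub_distrib]; linarith
      have hterm := (Finset.sum_eq_zero_iff_of_nonneg
        (fun k _ => sub_nonneg.2 (hle φ hφ k))).1 h0
      funext k
      rw [hφeq j k]
      refine key_eq (hf j k) (hcpos j k) (hα j k).1 (hα j k).2 (hφ k) ?_
      have := hterm k (Finset.mem_univ k)
      rw [← hφeq j k]
      linarith [sub_eq_zero.1 this]
end

section
/- (Aggregate payoff bound at the market-clearing price.) Let W_1,…,W_J ∈ ℝ with R := Σ_j W_j > 0, let p° be the unique solution of Σ_{j,k} a^k d_j^k (p° + e_j^k)^{1/(α_j^k − 1)} = R with p° > −min_{j,k} e_j^k, and assume p° ≥ 0. Set φ*_j^k := d_j^k (p° + e_j^k)^{1/(α_j^k − 1)}. Then for every feasible triple (φ, ψ, p) — meaning φ_j ∈ ℝ_{≥0}^K for all j, ψ ∈ ℝ^J with Σ_j ψ_j = 0, p ∈ ℝ, and Σ_k a^k φ_j^k + ψ_j ≤ W_j for every j — one has Σ_j (F_j(φ_j) + ψ_j·p) ≤ Σ_j F_j(φ*_j). -/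
open Real

lemma bern (xs x β : ℝ) (hxs : 0 < xs) (hx : 0 ≤ x) (hβ0 : 0 ≤ β) (hβ1 : β ≤ 1) :
    x ^ β ≤ xs ^ β + β * xs ^ (β - 1) * (x - xs) := by
  have hs : (-1 : ℝ) ≤ x / xs - 1 := by
    have := div_nonneg hx hxs.le; linarith
  have h := rpow_one_add_le_one_add_mul_self hs hβ0 hβ1
  have h1 : (1 : ℝ) + (x / xs - 1) = x / xs := by ring
  rw [h1, Real.div_rpow hx hxs.le] at h
  have hpow : 0 < xs ^ β := rpow_pos_of_pos hxs β
  have hsub : xs ^ (β - 1) = xs ^ β / xs := by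
    rw [Real.rpow_sub hxs, Real.rpow_one]
  rw [hsub]
  have h2 : x ^ β ≤ xs ^ β * (1 + β * (x / xs - 1)) := by
    have := (div_le_iff₀ hpow).mp h
    linarith [this]
  calc x ^ β ≤ xs ^ β * (1 + β * (x / xs - 1)) := h2
    _ = xs ^ β + β * (xs ^ β / xs) * (x - xs) := by field_simp

lemma key (f c β x : ℝ) (hf : 0 < f) (hc : 0 < c) (hβ : β ∈ Set.Ioo (0:ℝ) 1) (hx : 0 ≤ x) :
    f * x ^ β - c * x ≤
      f * ((c / (β * f)) ^ (1 / (β - 1))) ^ β - c * (c / (β * f)) ^ (1 / (β - 1)) := by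
  obtain ⟨hβ0, hβ1⟩ := hβ
  set xs := (c / (β * f)) ^ (1 / (β - 1)) with hxs_def
  have hbase : 0 < c / (β * f) := div_pos hc (mul_pos hβ0 hf)
  have hxs : 0 < xs := rpow_pos_of_pos hbase _
  have hstat : β * f * xs ^ (β - 1) = c := by
    have hne : β - 1 ≠ 0 := by linarith
    have : xs ^ (β - 1) = (c / (β * f)) ^ ((1 / (β - 1)) * (β - 1)) := by
      rw [Real.rpow_mul hbase.le]
    rw [this, one_div_mul_cancel hne, Real.rpow_one]
    field_simp
  have hb := bern xs x β hxs hx hβ0.le hβ1.le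
  have := mul_le_mul_of_nonneg_left hb hf.le
  nlinarith [this, hstat]

theorem stmt11 (J K : ℕ) (hJ : 1 ≤ J) (hK : 1 ≤ K)
    (f q : Fin J → Fin K → ℝ) (a : Fin K → ℝ) (α : Fin J → Fin K → ℝ)
    (hf : ∀ j k, 0 < f j k) (hq : ∀ j k, 0 ≤ q j k) (ha : ∀ k, 0 < a k)
    (hα : ∀ j k, α j k ∈ Set.Ioo (0 : ℝ) 1)
    (W : Fin J → ℝ) (hW : 0 < ∑ j, W j) (p0 : ℝ)
    (hp0 : -(⨅ j, ⨅ k, ecoef q a j k) < p0) (hp0nonneg : 0 ≤ p0)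
    (hclear : ∑ j, ∑ k, a k * dcoef f α a j k *
      (p0 + ecoef q a j k) ^ (1 / (α j k - 1)) = ∑ j, W j) :
    let φstar : Fin J → Fin K → ℝ := fun j k =>
      dcoef f α a j k * (p0 + ecoef q a j k) ^ (1 / (α j k - 1))
    ∀ (φ : Fin J → Fin K → ℝ) (ψ : Fin J → ℝ) (p : ℝ),
      (∀ j k, 0 ≤ φ j k) → (∑ j, ψ j = 0) →
      (∀ j, ∑ k, a k * φ j k + ψ j ≤ W j) →
      ∑ j, (prodProfit f q α j (φ j) + ψ j * p) ≤
        ∑ j, prodProfit f q α j (φstar j) := by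
  intro φstar φ ψ p hφ hψ hbudget
  haveI : Nonempty (Fin J) := Fin.pos_iff_nonempty.mp hJ
  haveI : Nonempty (Fin K) := Fin.pos_iff_nonempty.mp hK
  -- positivity of p0 + e j k
  have hpe : ∀ j k, 0 < p0 + ecoef q a j k := by
    intro j k
    have h1 : (⨅ j, ⨅ k, ecoef q a j k) ≤ ⨅ k, ecoef q a j k :=
      ciInf_le (Set.Finite.bddBelow (Set.finite_range _)) j
    have h2 : (⨅ k, ecoef q a j k) ≤ ecoef q a j k :=
      ciInf_le (Set.Finite.bddBelow (Set.finite_range _)) k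
    linarith
  -- φstar as the optimizer of f x^α − c x with c = q + p0 a
  have hstar_eq : ∀ j k, φstar j k =
      ((q j k + p0 * a k) / (α j k * f j k)) ^ (1 / (α j k - 1)) := by
    intro j k
    have hbase1 : (0:ℝ) ≤ a k / (α j k * f j k) :=
      (div_pos (ha k) (mul_pos (hα j k).1 (hf j k))).le
    show dcoef f α a j k * (p0 + ecoef q a j k) ^ (1 / (α j k - 1)) = _
    rw [dcoef, ← Real.mul_rpow hbase1 (hpe j k).le]
    congr 1
    rw [ecoef]
    field_simp [(ha k).ne', ((hα j k).1).ne', (hf j k).ne']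
    ring
  -- per-term inequality
  have hterm : ∀ j k,
      f j k * φ j k ^ α j k - q j k * φ j k - p0 * (a k * φ j k) ≤
      f j k * φstar j k ^ α j k - q j k * φstar j k - p0 * (a k * φstar j k) := by
    intro j k
    have hc : 0 < q j k + p0 * a k := by
      have : ecoef q a j k * a k = q j k := by
        rw [ecoef]; field_simp [(ha k).ne']
      nlinarith [hpe j k, ha k]
    have := key (f j k) (q j k + p0 * a k) (α j k) (φ j k) (hf j k) hc (hα j k) (hφ j k)
    rw [← hstar_eq j k] at this
    nlinarith [this]
  -- water used by φstar equals total allocation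
  have hstar_water : ∑ j, ∑ k, a k * φstar j k = ∑ j, W j := by
    rw [← hclear]
    exact Finset.sum_congr rfl fun j _ => Finset.sum_congr rfl fun k _ => by
      simp [φstar, mul_assoc]
  -- water used by φ is at most total allocation
  have hwater : ∑ j, ∑ k, a k * φ j k ≤ ∑ j, W j := by
    have h1 : ∑ j, (∑ k, a k * φ j k + ψ j) ≤ ∑ j, W j :=
      Finset.sum_le_sum fun j _ => hbudget j
    rw [Finset.sum_add_distrib, hψ, add_zero] at h1
    exact h1
  -- aggregation
  have hsum : ∑ j, (prodProfit f q α j (φ j) + ψ j * p) =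
      ∑ j, prodProfit f q α j (φ j) := by
    rw [Finset.sum_add_distrib, ← Finset.sum_mul, hψ, zero_mul, add_zero]
  rw [hsum]
  have hmain : ∑ j, prodProfit f q α j (φ j) - p0 * ∑ j, ∑ k, a k * φ j k ≤
      ∑ j, prodProfit f q α j (φstar j) - p0 * ∑ j, ∑ k, a k * φstar j k := by
    have h1 : ∀ j, prodProfit f q α j (φ j) - p0 * ∑ k, a k * φ j k ≤
        prodProfit f q α j (φstar j) - p0 * ∑ k, a k * φstar j k := by
      intro j
      rw [prodProfit, prodProfit, Finset.mul_sum, Finset.mul_sum,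
        ← Finset.sum_sub_distrib, ← Finset.sum_sub_distrib]
      exact Finset.sum_le_sum fun k _ => hterm j k
    calc ∑ j, prodProfit f q α j (φ j) - p0 * ∑ j, ∑ k, a k * φ j k
        = ∑ j, (prodProfit f q α j (φ j) - p0 * ∑ k, a k * φ j k) := by
          rw [Finset.sum_sub_distrib, Finset.mul_sum]
      _ ≤ ∑ j, (prodProfit f q α j (φstar j) - p0 * ∑ k, a k * φstar j k) :=
          Finset.sum_le_sum fun j _ => h1 j
      _ = ∑ j, prodProfit f q α j (φstar j) - p0 * ∑ j, ∑ k, a k * φstar j k := by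
          rw [Finset.sum_sub_distrib, Finset.mul_sum]
  have hw2 : p0 * ∑ j, ∑ k, a k * φ j k ≤ p0 * ∑ j, W j :=
    mul_le_mul_of_nonneg_left hwater hp0nonneg
  rw [hstar_water] at hmain
  linarith
end

section
/- (Pareto optimality of the market-clearing price.) Let W_1,…,W_J ∈ ℝ with R := Σ_j W_j > 0, let p° be the unique solution of Σ_{j,k} a^k d_j^k (p° + e_j^k)^{1/(α_j^k − 1)} = R with p° > −min_{j,k} e_j^k, and assume p° ≥ 0. Set φ*_j^k := d_j^k (p° + e_j^k)^{1/(α_j^k − 1)} and ψ*_j := W_j − Σ_k a^k φ*_j^k. Then the triple (φ*, ψ*, p°) is Pareto optimal: there is no feasible triple (φ, ψ, p) such that F_j(φ_j) + ψ_j·p ≥ F_j(φ*_j) + ψ*_j·p° for every j, with strict inequality for at least one j. -/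
lemma tangent_rpow_s12 (α x t : ℝ) (hα0 : 0 < α) (hα1 : α < 1) (hx : 0 ≤ x) (ht : 0 < t) :
    x ^ α ≤ α * t ^ (α - 1) * x + (1 - α) * t ^ α := by
  have h := Real.geom_mean_le_arith_mean2_weighted (w₁ := α) (w₂ := 1 - α) (p₁ := x)
    (p₂ := t) hα0.le (by linarith) hx ht.le (by ring)
  have htp : (0:ℝ) < t ^ (α - 1) := Real.rpow_pos_of_pos ht _
  have h1 : t ^ (1 - α) * t ^ (α - 1) = 1 := by
    rw [← Real.rpow_add ht]; norm_num
  have h2 : t ^ (α - 1) * t = t ^ α := by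
    nth_rewrite 2 [← Real.rpow_one t]
    rw [← Real.rpow_add ht]; ring_nf
  have h3 := mul_le_mul_of_nonneg_right h htp.le
  calc x ^ α = x ^ α * (t ^ (1 - α) * t ^ (α - 1)) := by rw [h1, mul_one]
    _ = x ^ α * t ^ (1 - α) * t ^ (α - 1) := by ring
    _ ≤ (α * x + (1 - α) * t) * t ^ (α - 1) := h3
    _ = α * t ^ (α - 1) * x + (1 - α) * (t ^ (α - 1) * t) := by ring
    _ = α * t ^ (α - 1) * x + (1 - α) * t ^ α := by rw [h2]

lemma max_point (f α r x : ℝ) (hf : 0 < f) (hα0 : 0 < α) (hα1 : α < 1) (hr : 0 < r)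
    (hx : 0 ≤ x) :
    f * x ^ α - r * x ≤
      f * ((r / (α * f)) ^ (1 / (α - 1))) ^ α - r * ((r / (α * f)) ^ (1 / (α - 1))) := by
  set t := (r / (α * f)) ^ (1 / (α - 1)) with htdef
  have hbase : 0 < r / (α * f) := div_pos hr (mul_pos hα0 hf)
  have ht : 0 < t := Real.rpow_pos_of_pos hbase _
  have hne : α - 1 ≠ 0 := by linarith
  have htr : t ^ (α - 1) = r / (α * f) := by
    rw [htdef, ← Real.rpow_mul hbase.le, one_div, inv_mul_cancel₀ hne, Real.rpow_one]
  have hr' : f * α * t ^ (α - 1) = r := by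
    rw [htr]; field_simp
  have h2 : t ^ (α - 1) * t = t ^ α := by
    nth_rewrite 2 [← Real.rpow_one t]
    rw [← Real.rpow_add ht]; ring_nf
  have htan := tangent_rpow_s12 α x t hα0 hα1 hx ht
  have h4 : f * x ^ α ≤ r * x + f * (1 - α) * t ^ α := by
    calc f * x ^ α ≤ f * (α * t ^ (α - 1) * x + (1 - α) * t ^ α) :=
          mul_le_mul_of_nonneg_left htan hf.le
      _ = (f * α * t ^ (α - 1)) * x + f * (1 - α) * t ^ α := by ring
      _ = r * x + f * (1 - α) * t ^ α := by rw [hr']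
  have h5 : r * t = f * α * t ^ α := by
    calc r * t = (f * α * t ^ (α - 1)) * t := by rw [hr']
      _ = f * α * (t ^ (α - 1) * t) := by ring
      _ = f * α * t ^ α := by rw [h2]
  linarith

theorem stmt12 (J K : ℕ) (hJ : 1 ≤ J) (hK : 1 ≤ K)
    (f q : Fin J → Fin K → ℝ) (a : Fin K → ℝ) (α : Fin J → Fin K → ℝ)
    (hf : ∀ j k, 0 < f j k) (hq : ∀ j k, 0 ≤ q j k) (ha : ∀ k, 0 < a k)
    (hα : ∀ j k, α j k ∈ Set.Ioo (0 : ℝ) 1)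
    (W : Fin J → ℝ) (hW : 0 < ∑ j, W j) (p0 : ℝ)
    (hp0 : -(⨅ j, ⨅ k, ecoef q a j k) < p0) (hp0nonneg : 0 ≤ p0)
    (hclear : ∑ j, ∑ k, a k * dcoef f α a j k *
      (p0 + ecoef q a j k) ^ (1 / (α j k - 1)) = ∑ j, W j) :
    let φstar : Fin J → Fin K → ℝ := fun j k =>
      dcoef f α a j k * (p0 + ecoef q a j k) ^ (1 / (α j k - 1))
    let ψstar : Fin J → ℝ := fun j => W j - ∑ k, a k * φstar j k
    ¬ ∃ (φ : Fin J → Fin K → ℝ) (ψ : Fin J → ℝ) (p : ℝ),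
      (∀ j k, 0 ≤ φ j k) ∧ (∑ j, ψ j = 0) ∧
      (∀ j, ∑ k, a k * φ j k + ψ j ≤ W j) ∧
      (∀ j, prodProfit f q α j (φstar j) + ψstar j * p0 ≤
        prodProfit f q α j (φ j) + ψ j * p) ∧
      (∃ j, prodProfit f q α j (φstar j) + ψstar j * p0 <
        prodProfit f q α j (φ j) + ψ j * p) := by
  intro φstar ψstar
  rintro ⟨φ, ψ, p, hφpos, hψ0, hbud, hge, j0, hstrict⟩
  -- positivity of p0 + e
  have hpe : ∀ j k, 0 < p0 + ecoef q a j k := by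
    intro j k
    have h1 : (⨅ j, ⨅ k, ecoef q a j k) ≤ ⨅ k, ecoef q a j k :=
      ciInf_le (Set.finite_range _).bddBelow j
    have h2 : (⨅ k, ecoef q a j k) ≤ ecoef q a j k :=
      ciInf_le (Set.finite_range _).bddBelow k
    linarith
  -- closed form of φstar
  have hφstar_eq : ∀ j k, φstar j k =
      ((q j k + p0 * a k) / (α j k * f j k)) ^ (1 / (α j k - 1)) := by
    intro j k
    obtain ⟨hα0, hα1⟩ := hα j k
    show dcoef f α a j k * (p0 + ecoef q a j k) ^ (1 / (α j k - 1)) = _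
    rw [dcoef, ← Real.mul_rpow (div_pos (ha k) (mul_pos hα0 (hf j k))).le (hpe j k).le]
    congr 1
    rw [ecoef]
    have hane : a k ≠ 0 := (ha k).ne'
    have hafne : α j k * f j k ≠ 0 := (mul_pos hα0 (hf j k)).ne'
    field_simp
    ring
  have hrpos : ∀ j k, 0 < q j k + p0 * a k := by
    intro j k
    have h := mul_pos (ha k) (hpe j k)
    have e : a k * (p0 + ecoef q a j k) = q j k + p0 * a k := by
      have hane : a k ≠ 0 := (ha k).ne'
      rw [ecoef]; field_simp; ring
    linarith [e ▸ h]
  have hφstar_pos : ∀ j k, 0 ≤ φstar j k := by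
    intro j k
    have : (0:ℝ) < dcoef f α a j k := by
      obtain ⟨hα0, _⟩ := hα j k
      exact Real.rpow_pos_of_pos (div_pos (ha k) (mul_pos hα0 (hf j k))) _
    exact le_of_lt (mul_pos this (Real.rpow_pos_of_pos (hpe j k) _))
  -- per good maximization
  have hkey : ∀ j k (x : ℝ), 0 ≤ x →
      f j k * x ^ α j k - q j k * x - p0 * (a k * x) ≤
      f j k * (φstar j k) ^ α j k - q j k * φstar j k - p0 * (a k * φstar j k) := by
    intro j k x hx
    obtain ⟨hα0, hα1⟩ := hα j k
    have h := max_point (f j k) (α j k) (q j k + p0 * a k) x (hf j k) hα0 hα1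
      (hrpos j k) hx
    rw [← hφstar_eq j k] at h
    nlinarith [h]
  -- per agent
  have hagent : ∀ j, prodProfit f q α j (φ j) - p0 * ∑ k, a k * φ j k ≤
      prodProfit f q α j (φstar j) - p0 * ∑ k, a k * φstar j k := by
    intro j
    unfold prodProfit
    rw [Finset.mul_sum, Finset.mul_sum, ← Finset.sum_sub_distrib, ← Finset.sum_sub_distrib]
    apply Finset.sum_le_sum
    intro k _
    have := hkey j k (φ j k) (hφpos j k)
    linarith
  -- total star water equals total allocation
  have hwstar : ∑ j, ∑ k, a k * φstar j k = ∑ j, W j := by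
    rw [← hclear]
    apply Finset.sum_congr rfl; intro j _
    apply Finset.sum_congr rfl; intro k _
    rw [mul_assoc]
  have hψstar0 : ∑ j, ψstar j = 0 := by
    have : ∑ j, ψstar j = ∑ j, (W j - ∑ k, a k * φstar j k) := rfl
    rw [this, Finset.sum_sub_distrib, hwstar, sub_self]
  -- total payoffs strictly increase
  have hlt : ∑ j, (prodProfit f q α j (φstar j) + ψstar j * p0) <
      ∑ j, (prodProfit f q α j (φ j) + ψ j * p) :=
    Finset.sum_lt_sum (fun j _ => hge j) ⟨j0, Finset.mem_univ _, hstrict⟩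
  rw [Finset.sum_add_distrib, Finset.sum_add_distrib, ← Finset.sum_mul, ← Finset.sum_mul,
    hψstar0, hψ0, zero_mul, zero_mul, add_zero, add_zero] at hlt
  -- total water constraint
  have hwater : ∑ j, ∑ k, a k * φ j k ≤ ∑ j, W j := by
    have h := Finset.sum_le_sum (fun j (_ : j ∈ Finset.univ) => hbud j)
    rw [Finset.sum_add_distrib, hψ0, add_zero] at h
    exact h
  have hsumkey := Finset.sum_le_sum (fun j (_ : j ∈ Finset.univ) => hagent j)
  rw [Finset.sum_sub_distrib, Finset.sum_sub_distrib, ← Finset.mul_sum, ← Finset.mul_sum,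
    hwstar] at hsumkey
  have hmul : p0 * ∑ j, ∑ k, a k * φ j k ≤ p0 * ∑ j, W j :=
    mul_le_mul_of_nonneg_left hwater hp0nonneg
  linarith
end

section
/- (KKT characterization of the social optimum with production bounds.) In the power model, suppose additionally that each agent has production bounds 0 ≤ n_j^k ≤ N_j^k, k = 1,…,K. Let λ ∈ ℝ satisfy λ + e_j^k > 0 for all j, k, define φ_j^k := min(N_j^k, max(n_j^k, d_j^k (λ + e_j^k)^{1/(α_j^k − 1)})), and suppose Σ_{j,k} a^k φ_j^k = R. Then φ = (φ_j)_{j} maximizes the total production profit Σ_{j=1}^J F_j(φ'_j) over all φ' satisfying n_j^k ≤ φ'^k_j ≤ N_j^k for all j, k and Σ_{j,k} a^k φ'^k_j = R. -/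
open Real

/-- Tangent line inequality for the concave function `x ↦ F x^A - c x`. -/
lemma tangent_ineq (F c A : ℝ) (hF : 0 < F) (hA : A ∈ Set.Ioo (0:ℝ) 1)
    (t x : ℝ) (ht : 0 < t) (hx : 0 ≤ x) :
    F * x ^ A - c * x ≤ F * t ^ A - c * t + (F * A * t ^ (A - 1) - c) * (x - t) := by
  obtain ⟨hA0, hA1⟩ := hA
  have key : x ^ A ≤ t ^ A + A * t ^ (A - 1) * (x - t) := by
    have hs : (-1 : ℝ) ≤ x / t - 1 := by
      have : 0 ≤ x / t := div_nonneg hx ht.le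
      linarith
    have h := rpow_one_add_le_one_add_mul_self hs hA0.le hA1.le
    have h1 : (1 + (x / t - 1)) = x / t := by ring
    rw [h1] at h
    rw [Real.div_rpow hx ht.le] at h
    have htA : (0:ℝ) < t ^ A := rpow_pos_of_pos ht A
    have h' := mul_le_mul_of_nonneg_left h htA.le
    have h3 : t ^ A * (x ^ A / t ^ A) = x ^ A := by field_simp
    rw [h3] at h'
    have h4 : t ^ (A - 1) = t ^ A / t := by rw [rpow_sub ht, rpow_one]
    have h5 : t ^ A * (1 + A * (x / t - 1)) = t ^ A + A * (t ^ A / t) * (x - t) := by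
      field_simp
    rw [h4]
    linarith [h', h5.le]
  nlinarith [mul_le_mul_of_nonneg_left key hF.le]

/-- The clipped stationary point maximizes `x ↦ F x^A - c x` on `[n, N]`. -/
lemma clip_max (F c A : ℝ) (hF : 0 < F) (hc : 0 < c) (hA : A ∈ Set.Ioo (0:ℝ) 1)
    (n N y : ℝ) (hn : 0 ≤ n) (h1 : n ≤ y) (h2 : y ≤ N) :
    F * y ^ A - c * y ≤
      F * (min N (max n ((c / (F * A)) ^ (1 / (A - 1))))) ^ A
        - c * (min N (max n ((c / (F * A)) ^ (1 / (A - 1))))) := by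
  obtain ⟨hA0, hA1⟩ := hA
  set x0 : ℝ := (c / (F * A)) ^ (1 / (A - 1)) with hx0def
  have hbase : 0 < c / (F * A) := div_pos hc (by positivity)
  have hx0 : 0 < x0 := rpow_pos_of_pos hbase _
  have hA1' : A - 1 ≠ 0 := by linarith
  have hy0 : 0 ≤ y := le_trans hn h1
  have hstat : F * A * x0 ^ (A - 1) = c := by
    rw [hx0def, ← Real.rpow_mul hbase.le, one_div_mul_cancel hA1', rpow_one]
    field_simp
  set m : ℝ := min N (max n x0) with hmdef
  rcases lt_or_ge x0 n with hcase | hcase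
  · -- m = n, n > 0
    have hm : m = n := by
      rw [hmdef, max_eq_left hcase.le, min_eq_right (h1.trans h2)]
    have hn0 : 0 < n := hx0.trans hcase
    have hDn : F * A * n ^ (A - 1) - c ≤ 0 := by
      have : n ^ (A - 1) ≤ x0 ^ (A - 1) :=
        (rpow_lt_rpow_of_neg hx0 hcase (by linarith)).le
      nlinarith [mul_le_mul_of_nonneg_left this (by positivity : (0:ℝ) ≤ F * A)]
    have := tangent_ineq F c A hF ⟨hA0, hA1⟩ n y hn0 hy0
    rw [hm]
    nlinarith [this, mul_nonpos_of_nonpos_of_nonneg hDn (by linarith : 0 ≤ y - n)]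
  · rcases le_or_gt x0 N with hcase2 | hcase2
    · -- m = x0
      have hm : m = x0 := by
        rw [hmdef, max_eq_right hcase, min_eq_right hcase2]
      have := tangent_ineq F c A hF ⟨hA0, hA1⟩ x0 y hx0 hy0
      rw [hstat] at this
      rw [hm]
      linarith [this]
    · -- m = N
      have hm : m = N := by
        rw [hmdef, min_eq_left]
        exact le_max_of_le_right hcase2.le
      rcases eq_or_lt_of_le (hn.trans h1 |>.trans h2) with hN0 | hN0
      · -- N = 0, y = 0
        have hy : y = 0 := le_antisymm (h2.trans hN0.symm.le) hy0
        rw [hm, ← hN0, hy]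
      · have hDN : 0 ≤ F * A * N ^ (A - 1) - c := by
          have : x0 ^ (A - 1) ≤ N ^ (A - 1) :=
            (rpow_lt_rpow_of_neg hN0 hcase2 (by linarith)).le
          nlinarith [mul_le_mul_of_nonneg_left this (by positivity : (0:ℝ) ≤ F * A)]
        have := tangent_ineq F c A hF ⟨hA0, hA1⟩ N y hN0 hy0
        rw [hm]
        nlinarith [this, mul_nonpos_of_nonneg_of_nonpos hDN (by linarith : y - N ≤ 0)]

theorem stmt13 (J K : ℕ) (hJ : 1 ≤ J) (hK : 1 ≤ K)
    (f q : Fin J → Fin K → ℝ) (a : Fin K → ℝ) (α : Fin J → Fin K → ℝ)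
    (hf : ∀ j k, 0 < f j k) (hq : ∀ j k, 0 ≤ q j k) (ha : ∀ k, 0 < a k)
    (hα : ∀ j k, α j k ∈ Set.Ioo (0 : ℝ) 1)
    (n N : Fin J → Fin K → ℝ)
    (hn : ∀ j k, 0 ≤ n j k) (hnN : ∀ j k, n j k ≤ N j k)
    (R lam : ℝ) (hlam : ∀ j k, 0 < lam + ecoef q a j k) :
    let φ : Fin J → Fin K → ℝ := fun j k =>
      min (N j k) (max (n j k)
        (dcoef f α a j k * (lam + ecoef q a j k) ^ (1 / (α j k - 1))))
    (∑ j, ∑ k, a k * φ j k = R) →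
    ∀ φ' : Fin J → Fin K → ℝ,
      (∀ j k, n j k ≤ φ' j k ∧ φ' j k ≤ N j k) →
      (∑ j, ∑ k, a k * φ' j k = R) →
      ∑ j, prodProfit f q α j (φ' j) ≤ ∑ j, prodProfit f q α j (φ j) := by
  intro φ hφsum φ' hbounds hsum'
  -- the effective price of good k for agent j
  set c : Fin J → Fin K → ℝ := fun j k => q j k + lam * a k with hcdef
  have hc : ∀ j k, 0 < c j k := by
    intro j k
    have h := hlam j k
    have ha' := ha k
    have : 0 < a k * (lam + ecoef q a j k) := mul_pos ha' h
    simp only [ecoef] at this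
    have : a k * (lam + q j k / a k) = q j k + lam * a k := by
      field_simp; ring
    simp only [hcdef]
    nlinarith [mul_pos ha' h, this]
  have hrw : ∀ j k, dcoef f α a j k * (lam + ecoef q a j k) ^ (1 / (α j k - 1))
      = (c j k / (f j k * α j k)) ^ (1 / (α j k - 1)) := by
    intro j k
    have ha' := ha k
    have hf' := hf j k
    have hα' := hα j k
    have hd : (0:ℝ) ≤ a k / (α j k * f j k) :=
      div_nonneg ha'.le (mul_nonneg hα'.1.le hf'.le)
    have hl : (0:ℝ) ≤ lam + ecoef q a j k := (hlam j k).le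
    rw [dcoef, ← Real.mul_rpow hd hl]
    congr 1
    simp only [ecoef, hcdef]
    have h1 : α j k ≠ 0 := hα'.1.ne'
    have h2 : f j k ≠ 0 := hf'.ne'
    have h3 : a k ≠ 0 := ha'.ne'
    field_simp
    ring
  have key : ∀ j k,
      f j k * φ' j k ^ α j k - q j k * φ' j k - lam * (a k * φ' j k) ≤
      f j k * φ j k ^ α j k - q j k * φ j k - lam * (a k * φ j k) := by
    intro j k
    have h := clip_max (f j k) (c j k) (α j k) (hf j k) (hc j k) (hα j k)
      (n j k) (N j k) (φ' j k) (hn j k) (hbounds j k).1 (hbounds j k).2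
    have hφeq : φ j k = min (N j k) (max (n j k)
        ((c j k / (f j k * α j k)) ^ (1 / (α j k - 1)))) := by
      simp only [φ, hrw j k]
    rw [hφeq]
    simp only [hcdef] at h ⊢
    nlinarith [h]
  have H : ∑ j, ∑ k, (f j k * φ' j k ^ α j k - q j k * φ' j k - lam * (a k * φ' j k)) ≤
      ∑ j, ∑ k, (f j k * φ j k ^ α j k - q j k * φ j k - lam * (a k * φ j k)) :=
    Finset.sum_le_sum fun j _ => Finset.sum_le_sum fun k _ => key j k
  have e : ∀ ψ : Fin J → Fin K → ℝ,
      ∑ j, ∑ k, (f j k * ψ j k ^ α j k - q j k * ψ j k - lam * (a k * ψ j k)) =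
      (∑ j, prodProfit f q α j (ψ j)) - lam * (∑ j, ∑ k, a k * ψ j k) := by
    intro ψ
    simp only [prodProfit, Finset.mul_sum, ← Finset.sum_sub_distrib]
  rw [e, e, hsum', hφsum] at H
  linarith
end

section
/- (Existence of the clearing multiplier with production bounds.) In the power model with production bounds 0 ≤ n_j^k ≤ N_j^k, define for λ ∈ ℝ the clipped production levels φ_j^k(λ) := N_j^k if λ + e_j^k ≤ 0, and φ_j^k(λ) := min(N_j^k, max(n_j^k, d_j^k (λ + e_j^k)^{1/(α_j^k − 1)})) if λ + e_j^k > 0. If Σ_{j,k} a^k n_j^k < R < Σ_{j,k} a^k N_j^k, then there exists λ^{SO} ∈ ℝ such that Σ_{j,k} a^k φ_j^k(λ^{SO}) = R. -/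
open Filter Topology Set


theorem stmt14 (J K : ℕ) (hJ : 1 ≤ J) (hK : 1 ≤ K)
    (f q : Fin J → Fin K → ℝ) (a : Fin K → ℝ) (α : Fin J → Fin K → ℝ)
    (hf : ∀ j k, 0 < f j k) (hq : ∀ j k, 0 ≤ q j k) (ha : ∀ k, 0 < a k)
    (hα : ∀ j k, α j k ∈ Set.Ioo (0 : ℝ) 1)
    (n N : Fin J → Fin K → ℝ)
    (hn : ∀ j k, 0 ≤ n j k) (hnN : ∀ j k, n j k ≤ N j k)
    (R : ℝ)
    (hRlow : ∑ j, ∑ k, a k * n j k < R)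
    (hRhigh : R < ∑ j, ∑ k, a k * N j k) :
    let φclip : ℝ → Fin J → Fin K → ℝ := fun lam j k =>
      if lam + ecoef q a j k ≤ 0 then N j k
      else min (N j k) (max (n j k)
        (dcoef f α a j k * (lam + ecoef q a j k) ^ (1 / (α j k - 1))))
    ∃ lamSO : ℝ, ∑ j, ∑ k, a k * φclip lamSO j k = R := by
  intro φclip
  set e : Fin J → Fin K → ℝ := ecoef q a with he'
  set d : Fin J → Fin K → ℝ := dcoef f α a with hd'
  set p : Fin J → Fin K → ℝ := fun j k => 1 / (α j k - 1) with hp'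
  have hp : ∀ j k, p j k < 0 := fun j k =>
    div_neg_of_pos_of_neg one_pos (by linarith [(hα j k).2])
  have hd : ∀ j k, 0 < d j k := fun j k =>
    Real.rpow_pos_of_pos (div_pos (ha k) (mul_pos (hα j k).1 (hf j k))) _
  have he : ∀ j k, 0 ≤ e j k := fun j k => div_nonneg (hq j k) (ha k).le
  have hval : ∀ lam j k, φclip lam j k =
      if lam + e j k ≤ 0 then N j k
      else min (N j k) (max (n j k) (d j k * (lam + e j k) ^ p j k)) := fun _ _ _ => rfl
  -- δ lemma
  have hdelta : ∀ j k, ∃ δ > 0, ∀ x : ℝ, 0 < x → x ≤ δ → N j k ≤ d j k * x ^ p j k := by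
    intro j k
    by_cases hN : N j k ≤ 0
    · exact ⟨1, one_pos, fun x hx _ => le_trans hN
        (le_of_lt (mul_pos (hd j k) (Real.rpow_pos_of_pos hx _)))⟩
    · push_neg at hN
      refine ⟨(N j k / d j k) ^ (p j k)⁻¹,
        Real.rpow_pos_of_pos (div_pos hN (hd j k)) _, fun x hx hxδ => ?_⟩
      have h1 : ((N j k / d j k) ^ (p j k)⁻¹) ^ p j k ≤ x ^ p j k :=
        Real.rpow_le_rpow_of_nonpos hx hxδ (hp j k).le
      rw [Real.rpow_inv_rpow (div_pos hN (hd j k)).le (hp j k).ne] at h1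
      have h2 := mul_le_mul_of_nonneg_left h1 (hd j k).le
      rwa [mul_comm (d j k) (N j k / d j k), div_mul_cancel₀ _ (hd j k).ne'] at h2
  -- continuity of each term
  have hcont : ∀ j k, Continuous fun lam => φclip lam j k := by
    intro j k
    rw [continuous_iff_continuousAt]
    intro x
    rcases lt_trichotomy (x + e j k) 0 with hx | hx | hx
    · have hev : ∀ᶠ lam in 𝓝 x, φclip lam j k = N j k := by
        have hopen : IsOpen {lam : ℝ | lam + e j k < 0} := isOpen_lt (by continuity) continuous_const
        filter_upwards [hopen.mem_nhds hx] with lam hlam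
        rw [hval]; exact if_pos (le_of_lt hlam)
      exact ContinuousAt.congr continuousAt_const (by filter_upwards [hev] with lam h using h.symm)
    · obtain ⟨δ, hδ, hδ2⟩ := hdelta j k
      have hev : ∀ᶠ lam in 𝓝 x, φclip lam j k = N j k := by
        rw [← nhdsLE_sup_nhdsGT x, eventually_sup]
        constructor
        · filter_upwards [self_mem_nhdsWithin] with lam (hlam : lam ≤ x)
          rw [hval]; exact if_pos (by linarith)
        · have hmem : Ioc x (x + δ) ∈ 𝓝[>] x := Ioc_mem_nhdsGT_of_mem ⟨le_refl _, by linarith⟩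
          filter_upwards [hmem] with lam hlam
          have h1 : 0 < lam + e j k := by have := hlam.1; linarith
          have h2 : lam + e j k ≤ δ := by have := hlam.2; linarith
          rw [hval, if_neg (not_le.2 h1), min_eq_left]
          exact le_trans (hδ2 _ h1 h2) (le_max_right _ _)
      exact ContinuousAt.congr continuousAt_const (by filter_upwards [hev] with lam h using h.symm)
    · have hopen : IsOpen {lam : ℝ | 0 < lam + e j k} := isOpen_lt continuous_const (by continuity)
      have hev : ∀ᶠ lam in 𝓝 x, φclip lam j k =
          min (N j k) (max (n j k) (d j k * (lam + e j k) ^ p j k)) := by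
        filter_upwards [hopen.mem_nhds hx] with lam hlam
        rw [hval]; exact if_neg (not_le.2 hlam)
      have hrp : ContinuousAt (fun lam : ℝ => (lam + e j k) ^ p j k) x :=
        ContinuousAt.rpow_const ((continuous_id.add continuous_const).continuousAt)
          (Or.inl (ne_of_gt hx))
      have hc : ContinuousAt (fun lam =>
          min (N j k) (max (n j k) (d j k * (lam + e j k) ^ p j k))) x := by
        exact Filter.Tendsto.min tendsto_const_nhds
          (Filter.Tendsto.max tendsto_const_nhds (continuousAt_const.mul hrp))
      exact hc.congr (by filter_upwards [hev] with lam h using h.symm)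
  have hFcont : Continuous fun lam => ∑ j, ∑ k, a k * φclip lam j k := by
    refine continuous_finset_sum _ fun j _ => continuous_finset_sum _ fun k _ =>
      continuous_const.mul (hcont j k)
  -- limit atTop
  have htend : Tendsto (fun lam => ∑ j, ∑ k, a k * φclip lam j k) atTop
      (𝓝 (∑ j, ∑ k, a k * n j k)) := by
    refine tendsto_finset_sum _ fun j _ => tendsto_finset_sum _ fun k _ => ?_
    have h0 : Tendsto (fun lam : ℝ => d j k * (lam + e j k) ^ p j k) atTop (𝓝 0) := by
      have h1 : Tendsto (fun x : ℝ => x ^ p j k) atTop (𝓝 0) := by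
        have := tendsto_rpow_neg_atTop (y := -(p j k)) (by linarith [hp j k])
        simpa using this
      have h2 : Tendsto (fun lam : ℝ => lam + e j k) atTop atTop :=
        tendsto_atTop_add_const_right _ _ tendsto_id
      simpa using (h1.comp h2).const_mul (d j k)
    have h3 : Tendsto (fun lam : ℝ =>
        min (N j k) (max (n j k) (d j k * (lam + e j k) ^ p j k))) atTop
        (𝓝 (n j k)) := by
      have := (tendsto_const_nhds (x := N j k) (f := atTop (α := ℝ))).min
        ((tendsto_const_nhds (x := n j k) (f := atTop (α := ℝ))).max h0)
      simpa [max_eq_left (hn j k), min_eq_right (hnN j k)] using this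
    have hevq : ∀ᶠ lam in atTop, a k * φclip lam j k =
        a k * min (N j k) (max (n j k) (d j k * (lam + e j k) ^ p j k)) := by
      filter_upwards [eventually_gt_atTop (-(e j k))] with lam hlam
      rw [hval, if_neg (not_le.2 (by linarith))]
    exact (h3.const_mul (a k)).congr' (by filter_upwards [hevq] with lam h using h.symm)
  -- find λ2 with F λ2 < R and λ2 ≥ λ1
  set lam1 : ℝ := -(1 + ∑ j, ∑ k, e j k) with hlam1
  have hesum : ∀ j k, e j k ≤ ∑ j, ∑ k, e j k := by
    intro j k
    calc e j k ≤ ∑ k, e j k := Finset.single_le_sum (fun k _ => he j k) (Finset.mem_univ k)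
      _ ≤ ∑ j, ∑ k, e j k := Finset.single_le_sum
          (fun j _ => Finset.sum_nonneg fun k _ => he j k) (Finset.mem_univ j)
  have hF1 : ∑ j, ∑ k, a k * φclip lam1 j k = ∑ j, ∑ k, a k * N j k := by
    refine Finset.sum_congr rfl fun j _ => Finset.sum_congr rfl fun k _ => ?_
    rw [hval, if_pos (by have := hesum j k; rw [hlam1]; linarith)]
  have hev2 : ∀ᶠ lam in atTop, (∑ j, ∑ k, a k * φclip lam j k) < R :=
    htend.eventually (Iio_mem_nhds hRlow)
  obtain ⟨lam2, hFlam2, hle12⟩ := (hev2.and (eventually_ge_atTop lam1)).exists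
  have hsub := intermediate_value_Icc' hle12 hFcont.continuousOn
  have hmem : R ∈ Icc ((fun lam => ∑ j, ∑ k, a k * φclip lam j k) lam2)
      ((fun lam => ∑ j, ∑ k, a k * φclip lam j k) lam1) := by
    constructor
    · exact le_of_lt hFlam2
    · simp only [hF1]; exact le_of_lt hRhigh
  obtain ⟨lamSO, _, hlamSO⟩ := hsub hmem
  exact ⟨lamSO, hlamSO⟩
end
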